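/- arXiv:2103.11839 — 4 statements merged into one kernel-verified Lean document; each statement's English description precedes it below -/
import Mathlib

section
/- Let m ≥ 1 be an integer and let x be a real number with 0 < x < 1. Then ∫₀ˣ log^m(t)/(1−t) dt = −log(1−x)·log^m(x) + m·Σ_{i=2}^{m+1} (−1)^{i−1} C(m−1,i−2)·(i−2)!·log^{m+1−i}(x)·Li_i(x), where C(m−1,i−2) is the binomial coefficient. Moreover, ∫₀¹ log^m(t)/(1−t) dt = (−1)^m m!·ζ(m+1). -/
/-- `Li p x = ∑_{n≥1} x^n / n^p`, the polylogarithm. -/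
noncomputable def Li (p : ℕ) (x : ℝ) : ℝ := ∑' n : ℕ, x ^ (n + 1) / (n + 1 : ℝ) ^ p

/-- `zr s = ζ(s) = ∑_{n≥1} n^{-s}`. -/
noncomputable def zr (s : ℕ) : ℝ := ∑' n : ℕ, 1 / (n + 1 : ℝ) ^ s

/-! Repeated integration by parts: since `t Li_{j+1}'(t) = Li_j(t)` and `Li_0(t) = t/(1 - t)`,
the derivative of `F(t) = ∑_{j=0}^{m} (-1)^j m!/(m-j)! log^{m-j}(t) Li_{j+1}(t)` telescopes to
`log^m t / (1 - t)` on `(0, 1)`. `F` extends continuously to `[0, 1]` with `F(0) = 0` and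
`F(1) = (-1)^m m! ζ(m+1)`: near `0` every term is `O(t log^k t)`, and near `1` the terms with
`j < m` vanish because `0 ≤ Li_{j+1} ≤ Li_1 = -log(1 - t)` and `log t · log(1 - t) → 0`.
The integrand has constant sign, so it is integrable on `(0, 1)`, and the fundamental theorem of
calculus gives both formulas. -/

open Real Filter Set Topology MeasureTheory Asymptotics

lemma norm_pow_div_succ_pow_le (k n p : ℕ) (x : ℝ) :
    ‖x ^ k / (n + 1 : ℝ) ^ p‖ ≤ |x| ^ k := by
  rw [norm_div, norm_pow, norm_pow, Real.norm_eq_abs, Real.norm_of_nonneg (by positivity)]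
  exact div_le_self (by positivity) (one_le_pow₀ (by linarith [n.cast_nonneg (α := ℝ)]))

lemma summable_Li (p : ℕ) {x : ℝ} (hx : |x| < 1) :
    Summable fun n : ℕ => x ^ (n + 1) / (n + 1 : ℝ) ^ p :=
  .of_norm_bounded ((summable_nat_add_iff 1).2 (summable_geometric_of_lt_one (abs_nonneg x) hx))
    (norm_pow_div_succ_pow_le _ · p x)

@[simp] lemma Li_zero_right (p : ℕ) : Li p 0 = 0 := by simp [Li]

@[simp] lemma Li_one_right (p : ℕ) : Li p 1 = zr p := by simp [Li, zr]

lemma Li_zero_left {x : ℝ} (hx : |x| < 1) : Li 0 x = x / (1 - x) := by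
  simp only [Li, pow_zero, div_one, pow_succ']
  rw [tsum_mul_left, tsum_geometric_of_abs_lt_one hx, div_eq_mul_inv]

lemma Li_one_left {x : ℝ} (hx : |x| < 1) : Li 1 x = -log (1 - x) := by
  simpa [Li] using (hasSum_pow_div_log_of_abs_lt_one hx).tsum_eq

lemma Li_nonneg (p : ℕ) {x : ℝ} (hx : 0 ≤ x) : 0 ≤ Li p x :=
  tsum_nonneg fun n => by positivity

lemma Li_le_Li {p q : ℕ} (hpq : p ≤ q) {x : ℝ} (hx0 : 0 ≤ x) (hx1 : x < 1) :
    Li q x ≤ Li p x := by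
  have hx : |x| < 1 := by rwa [abs_of_nonneg hx0]
  refine (summable_Li q hx).tsum_le_tsum (fun n => ?_) (summable_Li p hx)
  exact div_le_div_of_nonneg_left (by positivity) (by positivity)
    (pow_le_pow_right₀ (by linarith [n.cast_nonneg (α := ℝ)]) hpq)

lemma hasDerivAt_Li (q : ℕ) {x : ℝ} (hx : |x| < 1) (hx0 : x ≠ 0) :
    HasDerivAt (Li (q + 1)) (Li q x / x) x := by
  obtain ⟨r, hxr, hr1⟩ := exists_between hx
  have hx_mem : x ∈ Metric.ball 0 r := by rwa [Metric.mem_ball, dist_zero_right]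
  have hterm (n : ℕ) (y : ℝ) : HasDerivAt (fun z => z ^ (n + 1) / (n + 1 : ℝ) ^ (q + 1))
      (y ^ n / (n + 1 : ℝ) ^ q) y := by
    refine ((hasDerivAt_pow (n + 1) y).div_const _).congr_deriv ?_
    rw [Nat.add_sub_cancel, pow_succ _ q]
    push_cast
    field_simp
  have hbound (n : ℕ) (y : ℝ) (hy : y ∈ Metric.ball 0 r) : ‖y ^ n / (n + 1 : ℝ) ^ q‖ ≤ r ^ n := by
    rw [Metric.mem_ball, dist_zero_right, Real.norm_eq_abs] at hy
    exact (norm_pow_div_succ_pow_le n n q y).trans (pow_le_pow_left₀ (abs_nonneg y) hy.le n)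
  have hderiv : HasDerivAt (Li (q + 1)) (∑' n : ℕ, x ^ n / (n + 1 : ℝ) ^ q) x :=
    hasDerivAt_tsum_of_isPreconnected
      (summable_geometric_of_lt_one ((abs_nonneg x).trans hxr.le) hr1)
      Metric.isOpen_ball (convex_ball 0 r).isPreconnected (fun n y _ => hterm n y) hbound hx_mem
      (summable_Li (q + 1) hx) hx_mem
  convert hderiv using 1
  rw [Li, ← tsum_div_const]
  congr 1 with n
  field_simp
  ring

lemma continuousOn_Li {p : ℕ} (hp : 2 ≤ p) : ContinuousOn (Li p) (Icc (-1) 1) := by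
  refine continuousOn_tsum (fun n => by fun_prop) ((summable_nat_add_iff 1).2
    (Real.summable_one_div_nat_pow.2 hp)) fun n x hx => ?_
  rw [norm_div, norm_pow, Real.norm_eq_abs, Real.norm_of_nonneg (by positivity)]
  push_cast
  gcongr
  exact pow_le_one₀ (abs_nonneg x) (abs_le.2 hx)

lemma tendsto_log_pow_mul_self_nhdsGT_zero (k : ℕ) :
    Tendsto (fun t => log t ^ k * t) (𝓝[>] 0) (𝓝 0) := by
  -- substitute `t = exp (-u)`
  have h := ((tendsto_pow_mul_exp_neg_atTop_nhds_zero k).comp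
    (tendsto_neg_atBot_atTop.comp tendsto_log_nhdsGT_zero)).const_mul ((-1) ^ k)
  rw [mul_zero] at h
  refine h.congr' ?_
  filter_upwards [self_mem_nhdsWithin] with t (ht : 0 < t)
  simp [exp_log ht, ← mul_assoc, ← mul_pow]

lemma tendsto_mul_Li_of_le {l : Filter ℝ} {f : ℝ → ℝ} {p q : ℕ} (hpq : p ≤ q)
    (hl : ∀ᶠ t in l, t ∈ Ico 0 1) (h : Tendsto (fun t => f t * Li p t) l (𝓝 0)) :
    Tendsto (fun t => f t * Li q t) l (𝓝 0) := by
  refine squeeze_zero_norm' ?_ (by simpa using h.norm)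
  filter_upwards [hl] with t ht
  simp only [norm_mul, Real.norm_eq_abs, abs_of_nonneg (Li_nonneg _ ht.1)]
  exact mul_le_mul_of_nonneg_left (Li_le_Li hpq ht.1 ht.2) (abs_nonneg _)

lemma tendsto_log_pow_mul_Li_nhdsGT_zero (k p : ℕ) :
    Tendsto (fun t => log t ^ k * Li p t) (𝓝[>] 0) (𝓝 0) := by
  have hIoo : Ioo (0 : ℝ) 1 ∈ 𝓝[>] 0 := Ioo_mem_nhdsGT one_pos
  refine tendsto_mul_Li_of_le p.zero_le (mem_of_superset hIoo Ioo_subset_Ico_self) ?_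
  have hinv : Tendsto (fun t : ℝ => (1 - t)⁻¹) (𝓝[>] 0) (𝓝 1) := by
    simpa using (((continuous_sub_left (1 : ℝ)).tendsto 0).inv₀ (by norm_num)).mono_left
      nhdsWithin_le_nhds
  have h := (tendsto_log_pow_mul_self_nhdsGT_zero k).mul hinv
  rw [zero_mul] at h
  refine h.congr' ?_
  filter_upwards [hIoo] with t ht
  rw [Li_zero_left (abs_lt.2 ⟨by linarith [ht.1], ht.2⟩)]
  ring

lemma tendsto_log_mul_log_one_sub_nhdsLT_one :
    Tendsto (fun t => log t * log (1 - t)) (𝓝[<] 1) (𝓝 0) := by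
  have hlog : (fun t => log t) =O[𝓝[<] 1] (fun t => t - 1) := by
    simpa using ((hasDerivAt_log one_ne_zero).isBigO_sub).mono nhdsWithin_le_nhds
  refine (hlog.mul (isBigO_refl (fun t => log (1 - t)) _)).trans_tendsto ?_
  have h : Tendsto (fun t => negMulLog (1 - t)) (𝓝[<] 1) (𝓝 0) := by
    simpa [Function.comp_def] using
      ((continuous_negMulLog.comp (continuous_sub_left (1 : ℝ))).tendsto 1).mono_left
        (nhdsWithin_le_nhds (s := Iio 1))
  -- `(t - 1) log (1 - t) = negMulLog (1 - t)`
  refine h.congr fun t => ?_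
  simp only [negMulLog]
  ring

lemma tendsto_log_pow_succ_mul_Li_nhdsLT_one (k : ℕ) {p : ℕ} (hp : 1 ≤ p) :
    Tendsto (fun t => log t ^ (k + 1) * Li p t) (𝓝[<] 1) (𝓝 0) := by
  have hIoo : Ioo (0 : ℝ) 1 ∈ 𝓝[<] 1 := Ioo_mem_nhdsLT one_pos
  refine tendsto_mul_Li_of_le hp (mem_of_superset hIoo Ioo_subset_Ico_self) ?_
  have hlog : Tendsto log (𝓝[<] 1) (𝓝 0) := by
    simpa using (continuousAt_log one_ne_zero).tendsto.mono_left nhdsWithin_le_nhds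
  have h := ((hlog.pow k).mul tendsto_log_mul_log_one_sub_nhdsLT_one).neg
  rw [mul_zero, neg_zero] at h
  refine h.congr' ?_
  filter_upwards [hIoo] with t ht
  rw [Li_one_left (abs_lt.2 ⟨by linarith [ht.1], ht.2⟩)]
  ring

noncomputable def logPowPrimitive (m : ℕ) (t : ℝ) : ℝ :=
  ∑ j ∈ Finset.range (m + 1), (-1) ^ j * (m.descFactorial j : ℝ) * log t ^ (m - j) * Li (j + 1) t

lemma hasDerivAt_logPowPrimitive (m : ℕ) {t : ℝ} (ht0 : 0 < t) (ht1 : t < 1) :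
    HasDerivAt (logPowPrimitive m) (log t ^ m / (1 - t)) t := by
  have hx : |t| < 1 := abs_lt.2 ⟨by linarith, ht1⟩
  set f : ℕ → ℝ := fun j => (-1) ^ j * (m.descFactorial j : ℝ) * log t ^ (m - j) * Li j t
  have hterm (j : ℕ) : HasDerivAt
      (fun s => (-1) ^ j * (m.descFactorial j : ℝ) * log s ^ (m - j) * Li (j + 1) s)
      ((f j - f (j + 1)) / t) t := by
    have h := ((((hasDerivAt_log ht0.ne').pow (m - j)).const_mul
      ((-1) ^ j * (m.descFactorial j : ℝ))).mul (hasDerivAt_Li j hx ht0.ne'))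
    refine h.congr_deriv ?_
    simp only [f, Pi.pow_apply, Nat.descFactorial_succ, Nat.sub_sub]
    push_cast
    field_simp
    ring
  have hsum := HasDerivAt.fun_sum (u := Finset.range (m + 1)) fun j _ => hterm j
  rw [← Finset.sum_div, Finset.sum_range_sub'] at hsum
  refine hsum.congr_deriv ?_
  simp [f, Li_zero_left hx]
  field_simp

@[simp] lemma logPowPrimitive_zero_right (m : ℕ) : logPowPrimitive m 0 = 0 := by
  simp [logPowPrimitive]

lemma logPowPrimitive_one_right (m : ℕ) :
    logPowPrimitive m 1 = (-1) ^ m * (m.factorial : ℝ) * zr (m + 1) := by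
  rw [logPowPrimitive, Finset.sum_range_succ, Finset.sum_eq_zero fun j hj => ?_]
  · simp [Nat.descFactorial_self]
  · simp [Nat.sub_ne_zero_of_lt (Finset.mem_range.1 hj)]

lemma tendsto_logPowPrimitive_nhdsGT_zero (m : ℕ) :
    Tendsto (logPowPrimitive m) (𝓝[>] 0) (𝓝 0) := by
  have h := tendsto_finsetSum (Finset.range (m + 1)) fun j _ =>
    (tendsto_log_pow_mul_Li_nhdsGT_zero (m - j) (j + 1)).const_mul
      ((-1) ^ j * (m.descFactorial j : ℝ))
  simp only [mul_zero, Finset.sum_const_zero] at h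
  exact h.congr fun t => by simp only [logPowPrimitive, mul_assoc]

lemma tendsto_logPowPrimitive_nhdsLT_one {m : ℕ} (hm : 1 ≤ m) :
    Tendsto (logPowPrimitive m) (𝓝[<] 1) (𝓝 (logPowPrimitive m 1)) := by
  refine tendsto_finsetSum _ fun j hj => ?_
  simp only [mul_assoc]
  refine Tendsto.const_mul _ (Tendsto.const_mul _ ?_)
  rcases (Nat.lt_succ_iff.1 (Finset.mem_range.1 hj)).lt_or_eq with hjm | rfl
  · obtain ⟨k, hk⟩ : ∃ k, m - j = k + 1 := ⟨m - j - 1, by omega⟩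
    rw [hk]
    simpa using tendsto_log_pow_succ_mul_Li_nhdsLT_one k (Nat.le_add_left 1 j)
  · have hLi := ((continuousOn_Li (by omega : 2 ≤ j + 1)) 1 (by norm_num)).mono_of_mem_nhdsWithin
      (Icc_mem_nhdsLT (by norm_num))
    simpa using hLi.tendsto

lemma continuousOn_logPowPrimitive {m : ℕ} (hm : 1 ≤ m) :
    ContinuousOn (logPowPrimitive m) (Icc 0 1) := by
  intro t ht
  rcases eq_endpoints_or_mem_Ioo_of_mem_Icc ht with rfl | rfl | ⟨ht0, ht1⟩
  · refine (continuousWithinAt_Ioi_iff_Ici.1 ?_).mono Icc_subset_Ici_self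
    rw [ContinuousWithinAt, logPowPrimitive_zero_right]
    exact tendsto_logPowPrimitive_nhdsGT_zero m
  · exact (continuousWithinAt_Iio_iff_Iic.1 (tendsto_logPowPrimitive_nhdsLT_one hm)).mono
      Icc_subset_Iic_self
  · exact (hasDerivAt_logPowPrimitive m ht0 ht1).continuousAt.continuousWithinAt

lemma intervalIntegrable_log_pow_div_one_sub {m : ℕ} (hm : 1 ≤ m) :
    IntervalIntegrable (fun t => log t ^ m / (1 - t)) volume 0 1 := by
  have h := intervalIntegral.intervalIntegrable_deriv_of_nonneg (a := 0) (b := 1)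
    (g := fun t => (-1) ^ m * logPowPrimitive m t)
    (g' := fun t => (-1) ^ m * (log t ^ m / (1 - t)))
    (by rw [uIcc_of_le zero_le_one]; exact continuousOn_const.mul (continuousOn_logPowPrimitive hm))
    (fun t ht => by
      simp only [zero_le_one, min_eq_left, max_eq_right] at ht
      exact (hasDerivAt_logPowPrimitive m ht.1 ht.2).const_mul _)
    (fun t ht => by
      simp only [zero_le_one, min_eq_left, max_eq_right] at ht
      rw [← mul_div_assoc, ← mul_pow, neg_one_mul]
      exact div_nonneg (pow_nonneg (neg_nonneg.2 (log_nonpos ht.1.le ht.2.le)) m)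
        (sub_nonneg.2 ht.2.le))
  simpa [← mul_assoc, ← mul_pow] using h.const_mul ((-1 : ℝ) ^ m)

lemma integral_log_pow_div_one_sub {m : ℕ} (hm : 1 ≤ m) {b : ℝ} (hb0 : 0 < b) (hb1 : b ≤ 1) :
    ∫ t in (0 : ℝ)..b, log t ^ m / (1 - t) = logPowPrimitive m b := by
  have hsub : uIcc 0 b ⊆ uIcc 0 1 := by
    rw [uIcc_of_le hb0.le, uIcc_of_le zero_le_one]
    exact Icc_subset_Icc_right hb1
  rw [intervalIntegral.integral_eq_sub_of_hasDerivAt_of_le hb0.le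
    ((continuousOn_logPowPrimitive hm).mono (Icc_subset_Icc_right hb1))
    (fun t ht => hasDerivAt_logPowPrimitive m ht.1 (ht.2.trans_le hb1))
    ((intervalIntegrable_log_pow_div_one_sub hm).mono_set hsub), logPowPrimitive_zero_right,
    sub_zero]

lemma logPowPrimitive_eq (m : ℕ) {x : ℝ} (hx : |x| < 1) :
    logPowPrimitive m x = -log (1 - x) * log x ^ m
      + (m : ℝ) * ∑ i ∈ Finset.Icc 2 (m + 1), (-1 : ℝ) ^ (i - 1)
          * ((m - 1).choose (i - 2) : ℝ) * ((i - 2).factorial : ℝ)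
          * log x ^ (m + 1 - i) * Li i x := by
  obtain _ | n := m
  · simp [logPowPrimitive, Li_one_left hx]
  rw [logPowPrimitive, Finset.sum_range_succ', Li_one_left hx, add_comm,
    ← Finset.Ico_add_one_right_eq_Icc, Finset.sum_Ico_eq_sum_range, Finset.mul_sum]
  congr 1
  · simp [mul_comm]
  · refine Finset.sum_congr (by congr 1) fun j _ => ?_
    rw [show 2 + j - 1 = j + 1 by omega, show 2 + j - 2 = j by omega,
      show n + 1 + 1 - (2 + j) = n + 1 - (j + 1) by omega, show 2 + j = j + 1 + 1 by omega,
      Nat.succ_descFactorial_succ, Nat.descFactorial_eq_factorial_mul_choose]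
    push_cast
    ring

theorem stmt2 (m : ℕ) (hm : 1 ≤ m) (x : ℝ) (hx0 : 0 < x) (hx1 : x < 1) :
    (∫ t in (0:ℝ)..x, (Real.log t) ^ m / (1 - t)) =
      -(Real.log (1 - x)) * (Real.log x) ^ m
      + (m : ℝ) * ∑ i ∈ Finset.Icc 2 (m + 1), (-1 : ℝ) ^ (i - 1)
          * ((m - 1).choose (i - 2) : ℝ) * ((i - 2).factorial : ℝ)
          * (Real.log x) ^ (m + 1 - i) * Li i x ∧
    (∫ t in (0:ℝ)..1, (Real.log t) ^ m / (1 - t)) =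
      (-1 : ℝ) ^ m * (m.factorial : ℝ) * zr (m + 1) := by
  constructor
  · rw [integral_log_pow_div_one_sub hm hx0 hx1.le,
      logPowPrimitive_eq m (abs_lt.2 ⟨by linarith, hx1⟩)]
  · rw [integral_log_pow_div_one_sub hm one_pos le_rfl, logPowPrimitive_one_right]
end

section
/- Let m, n be integers with m ≥ n ≥ 2 and let x be a real number with 0 < x < 1. Write C(r,s,y) := ∫₀^y log^r(t)/(1−t)^s dt and A(r,1,y) := ∫₀^y log^r(1−t)/t dt. For 0 ≤ y ≤ n−2, let T_y be the set of integer chains (i_0, i_1, …, i_y) with i_0 = n and i_{j−1} > i_j ≥ 2 for 1 ≤ j ≤ y (for y = 0 the chain is the single entry i_0 = n), and for such a chain set W := ∏_{j=0}^{y} 1/(i_j − 1) and W' := ∏_{j=1}^{y} 1/(i_j − 1). Then C(m,n,x) = ((−1)^m m!/(n−1))·Σ_{y=0}^{n−2} ζ(m−y)·Σ_{(i_0,…,i_y)∈T_y} W' + Σ_{y=0}^{n−2} binom(m,y)·y!·(−1)^{y} Σ_{(i_0,…,i_y)∈T_y} W·( log^{m−y}(x)/(1−x)^{i_y−1} − log^{m−y}(x)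 ) + Σ_{y=0}^{n−2} binom(m,y+1)·(y+1)!·(−1)^{y} Σ_{(i_0,…,i_y)∈T_y} W·A(m−y−1,1,1−x). -/
/-- `A r s y = ∫₀^y log^r(1-t)/t^s dt`. -/
noncomputable def Aint (r s : ℕ) (y : ℝ) : ℝ := ∫ t in (0:ℝ)..y, (Real.log (1 - t)) ^ r / t ^ s

/-- `C r s y = ∫₀^y log^r(t)/(1-t)^s dt`. -/
noncomputable def Cint (r s : ℕ) (y : ℝ) : ℝ := ∫ t in (0:ℝ)..y, (Real.log t) ^ r / (1 - t) ^ s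

/-- `chainSum f n y = Σ_{(i_0,…,i_y) ∈ T_y} W · f i_y` with weight `W = ∏_{j=0}^y 1/(i_j-1)`,
the sum over all integer chains `i_0 = n > i_1 > ⋯ > i_y` with `i_j ≥ 2` for `1 ≤ j ≤ y`. -/
noncomputable def chainSum (f : ℕ → ℝ) : ℕ → ℕ → ℝ
  | n, 0 => (1 / ((n : ℝ) - 1)) * f n
  | n, y + 1 => (1 / ((n : ℝ) - 1)) * ∑ i ∈ Finset.Icc 2 (n - 1), chainSum f i y

/-- `chainSum' f n y = Σ_{(i_0,…,i_y) ∈ T_y} W' · f i_y` with weight `W' = ∏_{j=1}^y 1/(i_j-1)`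
(the factor `1/(i_0-1)` is omitted). -/
noncomputable def chainSum' (f : ℕ → ℝ) : ℕ → ℕ → ℝ
  | n, 0 => f n
  | n, y + 1 => ∑ i ∈ Finset.Icc 2 (n - 1), chainSum f i y

/-!
Integrating over `[0, x]` the derivative of `log^m t · ((1 - t)^{-(n-1)} - 1)`, which tends to `0`
at `0`, and using `((1 - t)^{-(n-1)} - 1) / t = ∑_{k=1}^{n-1} (1 - t)^{-k}`, gives the recurrence
`(n - 1) C(m,n,x) = log^m x ((1 - x)^{-(n-1)} - 1) - m ∑_{k=1}^{n-1} C(m-1,k,x)`.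
Unfolding it down to `s = 1` produces the chain sums, with the falling factorials
`m (m-1) ⋯ (m-y+1) = binom(m,y) y!` as coefficients. At `s = 1`,
`C(r,1,x) = ∫₀¹ log^r t / (1 - t) dt - A(r,1,1-x)`, and expanding `1 / (1 - t)` geometrically
turns the first integral into `∑_k ∫₀¹ t^k log^r t dt = (-1)^r r! ζ(r+1)`.
-/
open Real MeasureTheory Set Filter Topology intervalIntegral

lemma abs_log_pow_le {t : ℝ} (ht0 : 0 < t) (ht1 : t ≤ 1) (j : ℕ) :
    |log t| ^ j ≤ (2 * (j + 1)) ^ j * t ^ (-(1 / 2) : ℝ) := by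
  set ε : ℝ := (2 * (j + 1))⁻¹
  have hε : 0 < ε := by positivity
  have hlog : |log t| * t ^ ε ≤ 2 * (j + 1) := by
    have := abs_log_mul_self_rpow_lt t ε ht0 ht1 hε
    rw [abs_mul, abs_of_pos (rpow_pos_of_pos ht0 ε), one_div, inv_inv] at this
    exact this.le
  have hexp : 1 ≤ (t ^ ε) ^ j * t ^ (-(1 / 2) : ℝ) := by
    rw [← rpow_natCast, ← rpow_mul ht0.le, ← rpow_add ht0]
    refine one_le_rpow_of_pos_of_le_one_of_nonpos ht0 ht1 ?_
    have : ε * (2 * (j + 1)) = 1 := inv_mul_cancel₀ (by positivity)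
    linarith
  calc |log t| ^ j ≤ |log t| ^ j * ((t ^ ε) ^ j * t ^ (-(1 / 2) : ℝ)) :=
        le_mul_of_one_le_right (by positivity) hexp
    _ = (|log t| * t ^ ε) ^ j * t ^ (-(1 / 2) : ℝ) := by ring
    _ ≤ (2 * (j + 1)) ^ j * t ^ (-(1 / 2) : ℝ) := by gcongr

lemma intervalIntegrable_log_pow_mul {g : ℝ → ℝ} {c : ℝ} (hc0 : 0 < c) (hc1 : c ≤ 1)
    (hg : ContinuousOn g (Icc 0 c)) (j : ℕ) :
    IntervalIntegrable (fun t => log t ^ j * g t) volume 0 c := by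
  obtain ⟨M, hM⟩ := isCompact_Icc.exists_bound_of_continuousOn hg
  rw [intervalIntegrable_iff_integrableOn_Ioc_of_le hc0.le]
  have hdom :
      IntegrableOn (fun t : ℝ => (2 * (j + 1)) ^ j * t ^ (-(1 / 2) : ℝ) * M) (Ioc 0 c) := by
    have := intervalIntegrable_rpow' (a := 0) (b := c) (by norm_num : (-1 : ℝ) < -(1 / 2))
    rw [intervalIntegrable_iff_integrableOn_Ioc_of_le hc0.le] at this
    exact (this.const_mul _).mul_const M
  refine hdom.mono' ((measurable_log.pow_const j).aestronglyMeasurable.mul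
    ((hg.mono Ioc_subset_Icc_self).aestronglyMeasurable measurableSet_Ioc)) ?_
  refine (ae_restrict_iff' measurableSet_Ioc).2 (Eventually.of_forall fun t ht => ?_)
  rw [norm_mul, norm_pow, norm_eq_abs]
  exact mul_le_mul (abs_log_pow_le ht.1 (ht.2.trans hc1) j) (hM t (Ioc_subset_Icc_self ht))
    (norm_nonneg _) (mul_nonneg (by positivity) (rpow_nonneg ht.1.le _))

lemma intervalIntegrable_log_pow_div_one_sub_pow {x : ℝ} (hx0 : 0 < x) (hx1 : x < 1)
    (j k : ℕ) : IntervalIntegrable (fun t => log t ^ j / (1 - t) ^ k) volume 0 x := by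
  have hg : ContinuousOn (fun t : ℝ => ((1 - t) ^ k)⁻¹) (Icc 0 x) :=
    ((continuous_const.sub continuous_id).pow k).continuousOn.inv₀
      fun t ht => pow_ne_zero k (sub_ne_zero.2 (ht.2.trans_lt hx1).ne')
  simpa only [div_eq_mul_inv] using intervalIntegrable_log_pow_mul hx0 hx1.le hg j

lemma intervalIntegrable_log_pow_div_one_sub_near_one {x : ℝ} (hx0 : 0 < x) (hx1 : x ≤ 1)
    {r : ℕ} (hr : 1 ≤ r) : IntervalIntegrable (fun u => log u ^ r / (1 - u)) volume x 1 := by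
  rw [intervalIntegrable_iff_integrableOn_Ioo_of_le hx1]
  refine Integrable.mono' (integrableOn_const (C := |log x| ^ (r - 1) * x⁻¹)
    measure_Ioo_lt_top.ne) ((measurable_log.pow_const r).div
      (measurable_const.sub measurable_id)).aestronglyMeasurable ?_
  refine (ae_restrict_iff' measurableSet_Ioo).2 (Eventually.of_forall fun u hu => ?_)
  have hu0 : 0 < u := hx0.trans hu.1
  have h1u : 0 < 1 - u := by linarith [hu.2]
  have habs : |log u| ≤ |log x| := by
    rw [abs_of_nonpos (log_nonpos hu0.le hu.2.le), abs_of_nonpos (log_nonpos hx0.le hx1)]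
    linarith [log_le_log hx0 hu.1.le]
  have hslope : |log u| / (1 - u) ≤ x⁻¹ := by
    rw [div_le_iff₀ h1u, abs_of_nonpos (log_nonpos hu0.le hu.2.le)]
    have hlog := one_sub_inv_le_log_of_pos hu0
    have hinv : u⁻¹ * (1 - u) ≤ x⁻¹ * (1 - u) :=
      mul_le_mul_of_nonneg_right (inv_anti₀ hx0 hu.1.le) h1u.le
    have hexpand : u⁻¹ * (1 - u) = u⁻¹ - 1 := by field_simp
    linarith
  calc ‖log u ^ r / (1 - u)‖ = |log u| ^ (r - 1) * (|log u| / (1 - u)) := by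
        rw [norm_div, norm_pow, norm_eq_abs, norm_eq_abs, abs_of_pos h1u, mul_div_assoc',
          ← pow_succ, Nat.sub_add_cancel hr]
    _ ≤ |log x| ^ (r - 1) * x⁻¹ := by gcongr

lemma tendsto_mul_log_pow_nhdsGT_zero (j : ℕ) :
    Tendsto (fun u : ℝ => u * log u ^ j) (𝓝[>] 0) (𝓝 0) := by
  set ε : ℝ := ((j : ℝ) + 1)⁻¹
  have hε : 0 < ε := by positivity
  have hrpow : Tendsto (fun u : ℝ => u ^ ε) (𝓝[>] 0) (𝓝 0) := by
    simpa [zero_rpow hε.ne'] using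
      tendsto_nhdsWithin_of_tendsto_nhds ((continuous_rpow_const hε.le).tendsto 0)
  have h := ((tendsto_log_mul_rpow_nhdsGT_zero hε).pow j).mul hrpow
  rw [mul_zero] at h
  refine h.congr' (eventually_nhdsWithin_of_forall fun u (hu : 0 < u) => ?_)
  have : ε * j + ε = 1 := by rw [← mul_add_one]; exact inv_mul_cancel₀ (by positivity)
  rw [mul_pow, ← rpow_natCast (u ^ ε), ← rpow_mul hu.le, mul_assoc, ← rpow_add hu, this,
    rpow_one]
  ring

lemma integral_log_pow_mul_pow (r k : ℕ) :
    ∫ u in (0 : ℝ)..1, log u ^ r * u ^ k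
      = (-1) ^ r * r.factorial / ((k : ℝ) + 1) ^ (r + 1) := by
  induction r with
  | zero => simp [integral_pow]
  | succ r ih =>
    have hk : (k : ℝ) + 1 ≠ 0 := by positivity
    set F : ℝ → ℝ := fun u => u ^ (k + 1) * log u ^ (r + 1) / (k + 1)
    have hderiv : ∀ u ∈ Ioi (0 : ℝ), HasDerivAt F
        (log u ^ (r + 1) * u ^ k + (r + 1) / (k + 1) * (log u ^ r * u ^ k)) u := by
      intro u hu
      refine (((hasDerivAt_pow (k + 1) u).fun_mul
        ((hasDerivAt_log (ne_of_gt hu)).fun_pow (r + 1))).div_const ((k : ℝ) + 1)).congr_deriv ?_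
      have hu0 : u ≠ 0 := ne_of_gt hu
      field_simp
      push_cast
      ring
    have hint (j : ℕ) : IntervalIntegrable (fun u => log u ^ j * u ^ k) volume 0 1 :=
      intervalIntegrable_log_pow_mul one_pos le_rfl (continuous_pow k).continuousOn j
    have hF0 : Tendsto F (𝓝[>] 0) (𝓝 0) := by
      have := ((tendsto_nhdsWithin_of_tendsto_nhds ((continuous_pow k).tendsto 0)).mul
        (tendsto_mul_log_pow_nhdsGT_zero (r + 1))).div_const ((k : ℝ) + 1)
      rw [mul_zero, zero_div] at this
      exact this.congr fun u => by simp only [F]; ring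
    have hF1 : Tendsto F (𝓝[<] 1) (𝓝 0) := by
      simpa [F] using
        (hderiv 1 (mem_Ioi.2 one_pos)).continuousAt.continuousWithinAt.tendsto (s := Iio 1)
    have hFTC := integral_eq_sub_of_hasDerivAt_of_tendsto one_pos (fun u hu => hderiv u hu.1)
      ((hint (r + 1)).add ((hint r).const_mul _)) hF0 hF1
    rw [integral_add (hint _) ((hint r).const_mul _), intervalIntegral.integral_const_mul, ih]
      at hFTC
    rw [eq_neg_of_add_eq_zero_left (hFTC.trans (sub_zero 0)), Nat.factorial_succ]
    push_cast
    field_simp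
    ring

lemma summable_one_div_nat_add_one_pow {p : ℕ} (hp : 2 ≤ p) :
    Summable (fun n : ℕ => 1 / ((n : ℝ) + 1) ^ p) := by
  have := (summable_nat_add_iff 1).2 (Real.summable_one_div_nat_pow.2 (by omega : 1 < p))
  simpa using this

lemma integral_log_pow_div_one_sub_s4 {r : ℕ} (hr : 1 ≤ r) :
    ∫ u in (0 : ℝ)..1, log u ^ r / (1 - u) = (-1) ^ r * r.factorial * zr (r + 1) := by
  have hmoment (k : ℕ) : ∫ u in Ioo (0 : ℝ) 1, log u ^ r * u ^ k
      = (-1) ^ r * r.factorial * (1 / ((k : ℝ) + 1) ^ (r + 1)) := by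
    rw [← integral_Ioc_eq_integral_Ioo, ← integral_of_le zero_le_one,
      integral_log_pow_mul_pow, mul_one_div]
  have hint (k : ℕ) : IntegrableOn (fun u => log u ^ r * u ^ k) (Ioo 0 1) := by
    have := intervalIntegrable_log_pow_mul one_pos le_rfl (continuous_pow k).continuousOn r
    exact ((intervalIntegrable_iff_integrableOn_Ioo_of_le zero_le_one).1 this)
  -- on `(0, 1)` the terms `log u ^ r * u ^ k` all have the sign `(-1) ^ r`
  have hnorm (k : ℕ) : ∫ u in Ioo (0 : ℝ) 1, ‖log u ^ r * u ^ k‖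
      = r.factorial * (1 / ((k : ℝ) + 1) ^ (r + 1)) := by
    have hsign : EqOn (fun u => ‖log u ^ r * u ^ k‖) (fun u => (-1) ^ r * (log u ^ r * u ^ k))
        (Ioo 0 1) := fun u hu => by
      dsimp only
      rw [norm_mul, norm_pow, norm_pow, norm_eq_abs, norm_eq_abs, abs_of_pos hu.1,
        abs_of_nonpos (log_nonpos hu.1.le hu.2.le), neg_pow]
      ring
    rw [setIntegral_congr_fun measurableSet_Ioo hsign, MeasureTheory.integral_const_mul, hmoment,
      ← mul_assoc, ← mul_assoc, ← pow_add, ← two_mul, pow_mul]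
    norm_num
  have hgeom : EqOn (fun u => log u ^ r / (1 - u)) (fun u => ∑' k : ℕ, log u ^ r * u ^ k)
      (Ioo 0 1) := fun u hu => by
    dsimp only
    rw [tsum_mul_left, tsum_geometric_of_lt_one hu.1.le hu.2, div_eq_mul_inv]
  rw [integral_of_le zero_le_one, integral_Ioc_eq_integral_Ioo,
    setIntegral_congr_fun measurableSet_Ioo hgeom,
    ← integral_tsum_of_summable_integral_norm hint ?_, funext hmoment, tsum_mul_left]
  · rfl
  rw [funext hnorm]
  exact (summable_one_div_nat_add_one_pow (by omega)).mul_left _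

lemma Cint_one {x : ℝ} (hx0 : 0 < x) (hx1 : x < 1) {r : ℕ} (hr : 1 ≤ r) :
    Cint r 1 x = (-1) ^ r * r.factorial * zr (r + 1) - Aint r 1 (1 - x) := by
  have hA : Aint r 1 (1 - x) = ∫ u in x..1, log u ^ r / (1 - u) := by
    simpa only [Aint, pow_one, sub_sub_cancel, sub_zero] using
      integral_comp_sub_left (fun u => log u ^ r / (1 - u)) (a := 0) (b := 1 - x) 1
  have hsplit := integral_add_adjacent_intervals
    (intervalIntegrable_log_pow_div_one_sub_pow hx0 hx1 r 1)
    (by simpa only [pow_one] using intervalIntegrable_log_pow_div_one_sub_near_one hx0 hx1.le hr)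
  simp only [pow_one] at hsplit
  rw [Cint, hA, ← integral_log_pow_div_one_sub_s4 hr, ← hsplit]
  simp only [pow_one, add_sub_cancel_right]

lemma hasDerivAt_inv_one_sub_pow (N : ℕ) {t : ℝ} (ht : t ≠ 1) :
    HasDerivAt (fun u : ℝ => ((1 - u) ^ N)⁻¹) (N * ((1 - t) ^ (N + 1))⁻¹) t := by
  have h1t : 1 - t ≠ 0 := sub_ne_zero.2 ht.symm
  rcases N with _ | M
  · simpa using hasDerivAt_const t (1 : ℝ)
  refine ((((hasDerivAt_id t).const_sub 1).fun_pow (M + 1)).inv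
    (pow_ne_zero _ h1t)).congr_deriv ?_
  simp only [id]
  field_simp
  push_cast
  ring

lemma sum_Icc_inv_one_sub_pow (N : ℕ) {t : ℝ} (ht : t ≠ 0) (h1t : 1 - t ≠ 0) :
    ∑ k ∈ Finset.Icc 1 N, ((1 - t) ^ k)⁻¹ = (((1 - t) ^ N)⁻¹ - 1) / t := by
  induction N with
  | zero => simp
  | succ N ih =>
    rw [Finset.sum_Icc_succ_top (by omega), ih, pow_succ]
    field_simp
    ring

lemma nat_mul_Cint_succ (m N : ℕ) {x : ℝ} (hx0 : 0 < x) (hx1 : x < 1) :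
    N * Cint m (N + 1) x = log x ^ m / (1 - x) ^ N - log x ^ m
      - m * ∑ k ∈ Finset.Icc 1 N, Cint (m - 1) k x := by
  set F : ℝ → ℝ := fun t => log t ^ m * (((1 - t) ^ N)⁻¹ - 1)
  have hgeom : ∀ t ∈ Ioo (0 : ℝ) 1,
      ((1 - t) ^ N)⁻¹ - 1 = t * ∑ k ∈ Finset.Icc 1 N, ((1 - t) ^ k)⁻¹ := fun t ht => by
    rw [sum_Icc_inv_one_sub_pow N ht.1.ne' (by linarith [ht.2]), mul_div_cancel₀ _ ht.1.ne']
  have hderiv : ∀ t ∈ Ioo (0 : ℝ) 1, HasDerivAt F (m * ∑ k ∈ Finset.Icc 1 N,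
      log t ^ (m - 1) / (1 - t) ^ k + N * (log t ^ m / (1 - t) ^ (N + 1))) t := by
    intro t ht
    have ht0 : t ≠ 0 := ht.1.ne'
    refine (((hasDerivAt_log ht0).fun_pow m).fun_mul
      ((hasDerivAt_inv_one_sub_pow N ht.2.ne).sub_const 1)).congr_deriv ?_
    simp only [div_eq_mul_inv, ← Finset.mul_sum, hgeom t ht]
    field_simp
  have hint_sum : IntervalIntegrable
      (fun t => ∑ k ∈ Finset.Icc 1 N, log t ^ (m - 1) / (1 - t) ^ k) volume 0 x := by
    simpa only [Finset.sum_fn] using IntervalIntegrable.sum (Finset.Icc 1 N)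
      (f := fun k t => log t ^ (m - 1) / (1 - t) ^ k)
      fun k _ => intervalIntegrable_log_pow_div_one_sub_pow hx0 hx1 (m - 1) k
  have hint_last := intervalIntegrable_log_pow_div_one_sub_pow hx0 hx1 m (N + 1)
  have hF0 : Tendsto F (𝓝[>] 0) (𝓝 0) := by
    have hsum : Tendsto (fun t : ℝ => ∑ k ∈ Finset.Icc 1 N, ((1 - t) ^ k)⁻¹) (𝓝[>] 0)
        (𝓝 (∑ k ∈ Finset.Icc 1 N, ((1 - 0) ^ k)⁻¹)) :=
      tendsto_nhdsWithin_of_tendsto_nhds (tendsto_finsetSum _ fun k _ =>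
        (((continuous_const.sub continuous_id).pow k).continuousAt.inv₀ (by simp)).tendsto)
    have := (tendsto_mul_log_pow_nhdsGT_zero m).mul hsum
    rw [zero_mul] at this
    refine this.congr' (eventually_of_mem (Ioo_mem_nhdsGT one_pos) fun t ht => ?_)
    simp only [F, hgeom t ht]
    ring
  have hFTC := integral_eq_sub_of_hasDerivAt_of_tendsto hx0
    (fun t ht => hderiv t ⟨ht.1, ht.2.trans hx1⟩) ((hint_sum.const_mul _).add
      (hint_last.const_mul _)) hF0
    ((hderiv x ⟨hx0, hx1⟩).continuousAt.continuousWithinAt.tendsto (s := Iio x))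
  rw [integral_add (hint_sum.const_mul _) (hint_last.const_mul _),
    intervalIntegral.integral_const_mul, intervalIntegral.integral_const_mul,
    integral_finsetSum fun k _ => intervalIntegrable_log_pow_div_one_sub_pow hx0 hx1 _ k]
    at hFTC
  simp only [F, Cint] at hFTC ⊢
  rw [div_eq_mul_inv]
  linear_combination hFTC

lemma chainSum_sub (f g : ℕ → ℝ) :
    ∀ n y, chainSum (fun i => f i - g i) n y = chainSum f n y - chainSum g n y
  | n, 0 => by simp only [chainSum]; ring
  | n, y + 1 => by simp only [chainSum, chainSum_sub f g _ y, Finset.sum_sub_distrib]; ring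

lemma chainSum_const (c : ℝ) :
    ∀ n y, chainSum (fun _ => c) n y = c * chainSum (fun _ => 1) n y
  | n, 0 => by simp only [chainSum]; ring
  | n, y + 1 => by simp only [chainSum, chainSum_const c _ y, ← Finset.mul_sum]; ring

lemma chainSum'_eq_mul_chainSum (f : ℕ → ℝ) {n : ℕ} (hn : n ≠ 1) (y : ℕ) :
    chainSum' f n y = ((n : ℝ) - 1) * chainSum f n y := by
  have hn' : (n : ℝ) - 1 ≠ 0 := sub_ne_zero.2 (by exact_mod_cast hn)
  cases y <;> simp only [chainSum', chainSum] <;> field_simp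

lemma chainSum_eq_zero_of_le (f : ℕ → ℝ) :
    ∀ y n, 1 ≤ n → n ≤ y + 1 → chainSum f n y = 0
  | 0, n, h1, h2 => by
    obtain rfl : n = 1 := by omega
    simp [chainSum]
  | y + 1, n, h1, h2 => by
    rw [chainSum, Finset.sum_eq_zero fun i hi => ?_, mul_zero]
    rw [Finset.mem_Icc] at hi
    exact chainSum_eq_zero_of_le f y i (by omega) (by omega)

lemma sum_Icc_chainSum (f : ℕ → ℝ) (N y : ℕ) :
    ∑ k ∈ Finset.Icc 2 N, chainSum f k y = N * chainSum f (N + 1) (y + 1) := by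
  rcases N.eq_zero_or_pos with rfl | hN
  · simp
  rw [chainSum, Nat.add_sub_cancel, Nat.cast_add_one, add_sub_cancel_right,
    ← mul_assoc, mul_one_div_cancel (by positivity), one_mul]

lemma sum_Icc_sum_range_chainSum (a : ℕ → ℝ) (f : ℕ → ℕ → ℝ) (N : ℕ) :
    ∑ k ∈ Finset.Icc 2 N, ∑ y ∈ Finset.range (k - 1), a y * chainSum (f y) k y
      = N * ∑ y ∈ Finset.range (N - 1), a y * chainSum (f y) (N + 1) (y + 1) := by
  -- chains from `k ≤ N` have length `< N - 1`, so every inner sum may run over `range (N - 1)`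
  have hextend : ∀ k ∈ Finset.Icc 2 N, ∑ y ∈ Finset.range (k - 1), a y * chainSum (f y) k y
      = ∑ y ∈ Finset.range (N - 1), a y * chainSum (f y) k y := by
    intro k hk
    rw [Finset.mem_Icc] at hk
    refine Finset.sum_subset (Finset.range_subset_range.2 (by omega)) fun y _ hy => ?_
    rw [Finset.mem_range, not_lt] at hy
    rw [chainSum_eq_zero_of_le _ y k (by omega) (by omega), mul_zero]
  rw [Finset.sum_congr rfl hextend, Finset.sum_comm, Finset.mul_sum]
  refine Finset.sum_congr rfl fun y _ => ?_
  rw [← Finset.mul_sum, sum_Icc_chainSum]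
  ring

theorem eq_sum_chainSum_of_recurrence {c v : ℕ → ℕ → ℝ}
    (hrec : ∀ m N, 1 ≤ m → 1 ≤ N →
      N * c m (N + 1) = v m (N + 1) - m * ∑ k ∈ Finset.Icc 2 N, c (m - 1) k)
    {n m : ℕ} (hn : 2 ≤ n) (hm : n - 1 ≤ m) :
    c m n = ∑ y ∈ Finset.range (n - 1),
      (-1) ^ y * m.descFactorial y * chainSum (v (m - y)) n y := by
  induction n using Nat.strong_induction_on generalizing m with
  | _ n ih =>
  obtain ⟨N, rfl⟩ : ∃ N, n = N + 1 := ⟨n - 1, by omega⟩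
  obtain ⟨m, rfl⟩ : ∃ m', m = m' + 1 := ⟨m - 1, by omega⟩
  have hN : (N : ℝ) ≠ 0 := by norm_cast; omega
  have hsub : ∀ k ∈ Finset.Icc 2 N, c m k = ∑ y ∈ Finset.range (k - 1),
      (-1) ^ y * m.descFactorial y * chainSum (v (m - y)) k y := fun k hk => by
    rw [Finset.mem_Icc] at hk
    exact ih k (by omega) hk.1 (by omega)
  refine mul_left_cancel₀ hN ?_
  rw [hrec _ N (by omega) (by omega), Nat.add_sub_cancel, Finset.sum_congr rfl hsub,
    sum_Icc_sum_range_chainSum, Nat.add_sub_cancel,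
    show N = N - 1 + 1 by omega, Finset.sum_range_succ', ← show N = N - 1 + 1 by omega]
  have hterm : ∀ y, (-1) ^ (y + 1) * ((m + 1).descFactorial (y + 1) : ℝ)
      * chainSum (v (m + 1 - (y + 1))) (N + 1) (y + 1)
      = -(m + 1) * ((-1) ^ y * m.descFactorial y * chainSum (v (m - y)) (N + 1) (y + 1)) := by
    intro y
    rw [Nat.succ_descFactorial_succ, Nat.succ_sub_succ]
    push_cast
    ring
  rw [Finset.sum_congr rfl fun y _ => hterm y, ← Finset.mul_sum, chainSum.eq_1,
    Nat.descFactorial_zero, Nat.sub_zero, Nat.cast_add_one N, add_sub_cancel_right]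
  field_simp
  push_cast
  ring

lemma Cint_eq_sum_chainSum {x : ℝ} (hx0 : 0 < x) (hx1 : x < 1) {m n : ℕ} (hn : 2 ≤ n)
    (hm : n - 1 ≤ m) :
    Cint m n x = ∑ y ∈ Finset.range (n - 1), (-1) ^ y * m.descFactorial y
      * chainSum (fun i => log x ^ (m - y) / (1 - x) ^ (i - 1) - log x ^ (m - y)
        - ((m - y : ℕ) : ℝ) * Cint (m - y - 1) 1 x) n y := by
  refine eq_sum_chainSum_of_recurrence (c := fun m n => Cint m n x)
    (v := fun m i => log x ^ m / (1 - x) ^ (i - 1) - log x ^ m - m * Cint (m - 1) 1 x)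
    (fun m N _ hN => ?_) hn hm
  rw [nat_mul_Cint_succ m N hx0 hx1, ← Finset.add_sum_Ioc_eq_sum_Icc hN,
    ← Finset.Icc_add_one_left_eq_Ioc, Nat.add_sub_cancel, mul_add, ← sub_sub]
  rfl

lemma signed_descFactorial_mul_chainSum_eq {x : ℝ} (hx0 : 0 < x) (hx1 : x < 1) {m n y : ℕ}
    (hn : 2 ≤ n) (hy : y + 2 ≤ m) :
    (-1) ^ y * m.descFactorial y
      * chainSum (fun i => log x ^ (m - y) / (1 - x) ^ (i - 1) - log x ^ (m - y)
        - ((m - y : ℕ) : ℝ) * Cint (m - y - 1) 1 x) n y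
      = (-1 : ℝ) ^ m * m.factorial / ((n : ℝ) - 1)
          * (zr (m - y) * chainSum' (fun _ => (1 : ℝ)) n y)
        + m.choose y * y.factorial * (-1) ^ y
          * chainSum (fun i => log x ^ (m - y) / (1 - x) ^ (i - 1) - log x ^ (m - y)) n y
        + m.choose (y + 1) * (y + 1).factorial * (-1) ^ y
          * chainSum (fun _ => Aint (m - y - 1) 1 (1 - x)) n y := by
  rw [chainSum_sub _ (fun _ => _), chainSum_const, chainSum_const (Aint _ 1 (1 - x)),
    chainSum'_eq_mul_chainSum _ (by omega), Cint_one hx0 hx1 (by omega : 1 ≤ m - y - 1),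
    Nat.sub_add_cancel (by omega : 1 ≤ m - y)]
  have hn1 : (n : ℝ) - 1 ≠ 0 := sub_ne_zero.2 (by norm_cast; omega)
  have hchoose : (m.descFactorial y : ℝ) = m.choose y * y.factorial := by
    rw [Nat.descFactorial_eq_factorial_mul_choose]; push_cast; ring
  have hchoose' :
      (m.descFactorial y : ℝ) * (m - y : ℕ) = m.choose (y + 1) * (y + 1).factorial := by
    rw [mul_comm, ← Nat.cast_mul, ← Nat.descFactorial_succ,
      Nat.descFactorial_eq_factorial_mul_choose]
    push_cast
    ring
  have hfact : (m.descFactorial y : ℝ) * (m - y : ℕ) * (m - y - 1).factorial = m.factorial := by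
    rw [← Nat.factorial_mul_descFactorial (by omega : y ≤ m),
      show m - y = m - y - 1 + 1 by omega, Nat.factorial_succ]
    push_cast
    ring
  have hsign : (-1 : ℝ) ^ y * (-1) ^ (m - y - 1) = -(-1) ^ m := by
    have : (-1 : ℝ) ^ m = (-1) ^ (y + (m - y - 1)) * (-1) := by
      rw [← pow_succ, show y + (m - y - 1) + 1 = m by omega]
    rw [this, pow_add]
    ring
  set S := chainSum (fun _ => (1 : ℝ)) n y
  have hcancel : (-1 : ℝ) ^ m * m.factorial / (n - 1) * (zr (m - y) * ((n - 1) * S))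
      = (-1) ^ m * m.factorial * zr (m - y) * S := by
    field_simp
  linear_combination (-1) ^ y * chainSum (fun i => log x ^ (m - y) / (1 - x) ^ (i - 1)
      - log x ^ (m - y)) n y * hchoose + (-1) ^ y * Aint (m - y - 1) 1 (1 - x) * S * hchoose'
    - zr (m - y) * S * ((-1) ^ y * (-1) ^ (m - y - 1) * hfact + m.factorial * hsign) - hcancel

theorem stmt4 (m n : ℕ) (hn : 2 ≤ n) (hmn : n ≤ m) (x : ℝ) (hx0 : 0 < x) (hx1 : x < 1) :
    Cint m n x =
      ((-1 : ℝ) ^ m * (m.factorial : ℝ) / ((n : ℝ) - 1))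
        * (∑ y ∈ Finset.range (n - 1), zr (m - y) * chainSum' (fun _ => (1 : ℝ)) n y)
      + (∑ y ∈ Finset.range (n - 1), (m.choose y : ℝ) * (y.factorial : ℝ) * (-1 : ℝ) ^ y
        * chainSum (fun i =>
            (Real.log x) ^ (m - y) / (1 - x) ^ (i - 1) - (Real.log x) ^ (m - y)) n y)
      + (∑ y ∈ Finset.range (n - 1), (m.choose (y + 1) : ℝ) * ((y + 1).factorial : ℝ)
        * (-1 : ℝ) ^ y * chainSum (fun _ => Aint (m - y - 1) 1 (1 - x)) n y) := by
  rw [Cint_eq_sum_chainSum hx0 hx1 hn (by omega), Finset.mul_sum, ← Finset.sum_add_distrib,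
    ← Finset.sum_add_distrib]
  exact Finset.sum_congr rfl fun y hy =>
    signed_descFactorial_mul_chainSum_eq hx0 hx1 hn (by rw [Finset.mem_range] at hy; omega)
end

section
/- Let n, m ≥ 0 be integers and let x be a real number with 0 ≤ x < 1. Then ∫₀ˣ y^n log^m(1−y) dy = (−1)^m m!·Σ_{j=0}^{n} C(n,j)·(−1)^j/(j+1)^{m+1} − Σ_{j=0}^{n} C(n,j)·(−1)^j·((1−x)^{j+1}/(j+1))·Σ_{i=0}^{m} ((m+1−i)_i/(j+1)^i)·(−1)^i·log^{m−i}(1−x), where C(n,j) is a binomial coefficient. -/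
/-!
Substituting `u = 1 - y` turns the integral into `∫_{1-x}^1 (1-u)^n log^m u du`; expanding `(1-u)^n`
binomially reduces it to the integrals `∫ u^j log^m u du`. These have the explicit antiderivative
`u^(j+1)/(j+1) · ∑_i (m+1-i)_i (-1)^i log^(m-i) u / (j+1)^i`, obtained by integrating by parts `m`
times: differentiating it, consecutive terms telescope because the coefficients satisfy
`c_(i+1) = -(m-i)/(j+1) · c_i`. At `u = 1` only the term `i = m` survives, giving
`(-1)^m m! / (j+1)^(m+1)`.
-/

open Finset Real

/-- Pochhammer symbol `(t)_k = t(t+1)⋯(t+k-1)`. -/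
noncomputable def poch (t : ℝ) (k : ℕ) : ℝ := ∏ i ∈ Finset.range k, (t + i)

lemma poch_succ_left (t : ℝ) (k : ℕ) : poch t (k + 1) = t * poch (t + 1) k := by
  rw [poch, prod_range_succ', mul_comm, poch]
  simp only [Nat.cast_zero, add_zero, Nat.cast_succ, add_assoc, add_comm (1 : ℝ)]

lemma poch_one (m : ℕ) : poch 1 m = m.factorial := by
  induction m with
  | zero => simp [poch]
  | succ k ih =>
    rw [poch, prod_range_succ, ← poch, ih, Nat.factorial_succ]
    push_cast
    ring

noncomputable def logPowCoeff (m j i : ℕ) : ℝ :=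
  poch ((m : ℝ) + 1 - i) i / ((j : ℝ) + 1) ^ i * (-1) ^ i

lemma logPowCoeff_zero (m j : ℕ) : logPowCoeff m j 0 = 1 := by
  simp [logPowCoeff, poch]

lemma logPowCoeff_succ (m j i : ℕ) :
    logPowCoeff m j (i + 1) = -(((m : ℝ) - i) / ((j : ℝ) + 1)) * logPowCoeff m j i := by
  have hm : ((m : ℝ) + 1 - ↑(i + 1)) = m - i := by push_cast; ring
  rw [logPowCoeff, logPowCoeff, hm, poch_succ_left, sub_add_eq_add_sub]
  field_simp
  ring

lemma logPowCoeff_self (m j : ℕ) :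
    logPowCoeff m j m = (-1) ^ m * m.factorial / ((j : ℝ) + 1) ^ m := by
  rw [logPowCoeff, show (m : ℝ) + 1 - m = 1 by ring, poch_one]
  ring

lemma sum_logPowCoeff_mul_pow_add_sum_deriv (m j : ℕ) (L : ℝ) :
    ∑ i ∈ range (m + 1), logPowCoeff m j i * L ^ (m - i)
      + (∑ i ∈ range (m + 1), logPowCoeff m j i * ((↑(m - i) : ℝ) * L ^ (m - i - 1))) / ((j : ℝ) + 1)
      = L ^ m := by
  rw [sum_range_succ (fun i => logPowCoeff m j i * ((↑(m - i) : ℝ) * L ^ (m - i - 1))),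
    sum_range_succ' (fun i => logPowCoeff m j i * L ^ (m - i))]
  simp only [Nat.sub_self, Nat.cast_zero, zero_mul, mul_zero, add_zero, logPowCoeff_zero,
    Nat.sub_zero, one_mul, sum_div]
  rw [add_right_comm, ← sum_add_distrib, sum_eq_zero, zero_add]
  intro i hi
  have him : i < m := mem_range.mp hi
  rw [logPowCoeff_succ, Nat.cast_sub him.le, show m - (i + 1) = m - i - 1 by omega]
  field_simp
  ring

noncomputable def logPowAntideriv (m j : ℕ) (u : ℝ) : ℝ :=
  u ^ (j + 1) / ((j : ℝ) + 1) * ∑ i ∈ range (m + 1), logPowCoeff m j i * log u ^ (m - i)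

lemma hasDerivAt_logPowAntideriv (m j : ℕ) {u : ℝ} (hu : 0 < u) :
    HasDerivAt (logPowAntideriv m j) (u ^ j * log u ^ m) u := by
  set D := ∑ i ∈ range (m + 1), logPowCoeff m j i * ((↑(m - i) : ℝ) * log u ^ (m - i - 1)) with hD
  have hpow : HasDerivAt (fun u : ℝ => u ^ (j + 1) / ((j : ℝ) + 1)) (u ^ j) u := by
    refine ((hasDerivAt_pow (j + 1) u).div_const ((j : ℝ) + 1)).congr_deriv ?_
    push_cast
    field_simp
  have hsum : HasDerivAt (fun u => ∑ i ∈ range (m + 1), logPowCoeff m j i * log u ^ (m - i))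
      (D * u⁻¹) u := by
    rw [sum_mul]
    refine HasDerivAt.fun_sum fun i _ => ?_
    refine (((hasDerivAt_log hu.ne').fun_pow (m - i)).const_mul (logPowCoeff m j i)).congr_deriv ?_
    ring
  refine (hpow.fun_mul hsum).congr_deriv ?_
  rw [← sum_logPowCoeff_mul_pow_add_sum_deriv m j (log u), ← hD, pow_succ]
  field_simp

lemma logPowAntideriv_one (m j : ℕ) :
    logPowAntideriv m j 1 = (-1) ^ m * m.factorial / ((j : ℝ) + 1) ^ (m + 1) := by
  rw [logPowAntideriv, log_one, sum_range_succ, sum_eq_zero, Nat.sub_self, logPowCoeff_self]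
  · rw [pow_succ]
    field_simp
    ring
  · intro i hi
    rw [zero_pow (Nat.sub_ne_zero_of_lt (mem_range.mp hi)), mul_zero]

lemma intervalIntegrable_pow_mul_log_pow {a b : ℝ} (ha : 0 < a) (hb : 0 < b) (m j : ℕ) :
    IntervalIntegrable (fun u => u ^ j * log u ^ m) MeasureTheory.volume a b := by
  refine ContinuousOn.intervalIntegrable fun u hu => ?_
  have hu : 0 < u := lt_of_lt_of_le (lt_min ha hb) hu.1
  exact ((continuous_pow j).continuousAt.mul ((continuousAt_log hu.ne').pow m)).continuousWithinAt

lemma integral_pow_mul_log_pow {a b : ℝ} (ha : 0 < a) (hb : 0 < b) (m j : ℕ) :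
    ∫ u in a..b, u ^ j * log u ^ m = logPowAntideriv m j b - logPowAntideriv m j a :=
  intervalIntegral.integral_eq_sub_of_hasDerivAt
    (fun _ hu => hasDerivAt_logPowAntideriv m j (lt_of_lt_of_le (lt_min ha hb) hu.1))
    (intervalIntegrable_pow_mul_log_pow ha hb m j)

theorem stmt8_general (n m : ℕ) (x : ℝ) (hx1 : x < 1) :
    (∫ y in (0:ℝ)..x, y ^ n * (Real.log (1 - y)) ^ m) =
      (-1 : ℝ) ^ m * (m.factorial : ℝ)
        * (∑ j ∈ Finset.range (n + 1), (n.choose j : ℝ) * (-1 : ℝ) ^ j / ((j : ℝ) + 1) ^ (m + 1))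
      - ∑ j ∈ Finset.range (n + 1), (n.choose j : ℝ) * (-1 : ℝ) ^ j
          * ((1 - x) ^ (j + 1) / ((j : ℝ) + 1))
          * ∑ i ∈ Finset.range (m + 1), (poch ((m : ℝ) + 1 - i) i / ((j : ℝ) + 1) ^ i)
              * (-1 : ℝ) ^ i * (Real.log (1 - x)) ^ (m - i) := by
  have hx : 0 < 1 - x := by linarith
  have hsub : ∫ y in (0:ℝ)..x, y ^ n * log (1 - y) ^ m
      = ∫ u in (1 - x)..1, (1 - u) ^ n * log u ^ m := by
    simpa using intervalIntegral.integral_comp_sub_left (a := 0) (b := x)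
      (fun u => (1 - u) ^ n * log u ^ m) 1
  have hexpand : ∀ u : ℝ, (1 - u) ^ n * log u ^ m
      = ∑ j ∈ range (n + 1), (n.choose j : ℝ) * (-1) ^ j * (u ^ j * log u ^ m) := fun u => by
    rw [sub_eq_neg_add, add_pow, sum_mul]
    refine sum_congr rfl fun j _ => ?_
    rw [neg_pow]
    ring
  rw [hsub]
  simp_rw [hexpand]
  rw [intervalIntegral.integral_finsetSum fun j _ =>
    (intervalIntegrable_pow_mul_log_pow hx one_pos m j).const_mul _]
  simp only [intervalIntegral.integral_const_mul, integral_pow_mul_log_pow hx one_pos,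
    logPowAntideriv_one, mul_sub, sum_sub_distrib]
  congr 1
  · rw [mul_sum]
    exact sum_congr rfl fun j _ => by ring
  · simp only [logPowAntideriv, logPowCoeff, mul_assoc]

theorem stmt8 (n m : ℕ) (x : ℝ) (hx0 : 0 ≤ x) (hx1 : x < 1) :
    (∫ y in (0:ℝ)..x, y ^ n * (Real.log (1 - y)) ^ m) =
      (-1 : ℝ) ^ m * (m.factorial : ℝ)
        * (∑ j ∈ Finset.range (n + 1), (n.choose j : ℝ) * (-1 : ℝ) ^ j / ((j : ℝ) + 1) ^ (m + 1))
      - ∑ j ∈ Finset.range (n + 1), (n.choose j : ℝ) * (-1 : ℝ) ^ j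
          * ((1 - x) ^ (j + 1) / ((j : ℝ) + 1))
          * ∑ i ∈ Finset.range (m + 1), (poch ((m : ℝ) + 1 - i) i / ((j : ℝ) + 1) ^ i)
              * (-1 : ℝ) ^ i * (Real.log (1 - x)) ^ (m - i) :=
  stmt8_general n m x hx1
end

section
/- Let p ≥ 1 and m ≥ 0 be integers. Then ∫₀¹ x^m Li_p(x) dx = Σ_{j=2}^{p} (−1)^{p−j}·ζ(j)/(m+1)^{p+1−j} + (−1)^{p−1}·H_{m+1}/(m+1)^{p}. -/
/-- `H n = ∑_{j=1}^n 1/j`, the harmonic number. -/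
noncomputable def H (n : ℕ) : ℝ := ∑ j ∈ Finset.range n, 1 / ((j : ℝ) + 1)


/-!
Expanding `Li_p` termwise, `∫₀¹ x^m Li_p(x) dx = ∑ₙ 1 / ((n+1)^p (n+m+2))`. The partial fraction
`1 / (a^(p+1) b) = (1 / a^(p+1) - 1 / (a^p b)) / (b - a)`, with `b - a = m + 1`, lowers `p` by one at
the cost of a term `ζ(p+1) / (m+1)`; at `p = 1` the series telescopes to `H_{m+1} / (m+1)`.
-/

open Finset Filter MeasureTheory Topology

lemma H_add_sub_H (N k : ℕ) :
    H (N + k) - H N = ∑ i ∈ range k, 1 / (((N + i : ℕ) : ℝ) + 1) := by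
  rw [H, H, sum_range_add, add_sub_cancel_left]

lemma tendsto_H_add_sub_H (k : ℕ) : Tendsto (fun N ↦ H (N + k) - H N) atTop (𝓝 0) := by
  simp_rw [H_add_sub_H]
  rw [← sum_const_zero (s := range k)]
  refine tendsto_finsetSum _ fun i _ ↦ ?_
  exact tendsto_one_div_add_atTop_nhds_zero_nat.comp (tendsto_add_atTop_nat i)

lemma hasSum_one_div_sub_one_div_add (k : ℕ) :
    HasSum (fun n : ℕ ↦ 1 / ((n : ℝ) + 1) - 1 / ((n : ℝ) + k + 1)) (H k) := by
  have hnonneg (n : ℕ) : 0 ≤ 1 / ((n : ℝ) + 1) - 1 / ((n : ℝ) + k + 1) := by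
    rw [sub_nonneg]; gcongr; simp
  -- `HasSum` is unconditional convergence, so partial sums suffice only for nonnegative terms.
  rw [hasSum_iff_tendsto_nat_of_nonneg hnonneg]
  have hpartial (N : ℕ) : ∑ n ∈ range N, (1 / ((n : ℝ) + 1) - 1 / ((n : ℝ) + k + 1))
      = H k - (H (N + k) - H N) := by
    have hstep (n : ℕ) : 1 / ((n : ℝ) + 1) - 1 / ((n : ℝ) + k + 1)
        = (H (n + k) - H n) - (H (n + 1 + k) - H (n + 1)) := by
      rw [show n + 1 + k = n + k + 1 by omega]
      simp only [H, sum_range_succ]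
      push_cast
      ring
    rw [sum_congr rfl fun n _ ↦ hstep n, sum_range_sub', zero_add,
      show H 0 = 0 from sum_range_zero _, sub_zero]
  simpa only [hpartial, sub_zero] using (tendsto_H_add_sub_H k).const_sub (H k)

lemma one_div_pow_succ_mul_eq_sub_div {a b : ℝ} (p : ℕ) (ha : a ≠ 0) (hb : b ≠ 0) (hab : a ≠ b) :
    1 / (a ^ (p + 1) * b) = (1 / a ^ (p + 1) - 1 / (a ^ p * b)) / (b - a) := by
  have : b - a ≠ 0 := sub_ne_zero.mpr hab.symm
  field_simp
  ring

lemma summable_one_div_succ_pow {s : ℕ} (hs : 2 ≤ s) :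
    Summable fun n : ℕ ↦ 1 / ((n : ℝ) + 1) ^ s := by
  simpa using (summable_nat_add_iff 1).mpr (Real.summable_one_div_nat_pow.mpr hs)

lemma HasSum.one_div_pow_succ_mul {m p : ℕ} {s : ℝ} (hp : 1 ≤ p)
    (hs : HasSum (fun n : ℕ ↦ 1 / (((n : ℝ) + 1) ^ p * ((n : ℝ) + m + 2))) s) :
    HasSum (fun n : ℕ ↦ 1 / (((n : ℝ) + 1) ^ (p + 1) * ((n : ℝ) + m + 2)))
      ((zr (p + 1) - s) / ((m : ℝ) + 1)) := by
  have hzeta := (summable_one_div_succ_pow (s := p + 1) (by omega)).hasSum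
  refine (hzeta.sub hs).div_const ((m : ℝ) + 1) |>.congr_fun fun n ↦ ?_
  rw [one_div_pow_succ_mul_eq_sub_div p (by positivity) (by positivity) (by linarith)]
  ring

lemma hasSum_one_div_succ_mul (m : ℕ) :
    HasSum (fun n : ℕ ↦ 1 / (((n : ℝ) + 1) ^ 1 * ((n : ℝ) + m + 2))) (H (m + 1) / ((m : ℝ) + 1)) := by
  refine (hasSum_one_div_sub_one_div_add (m + 1)).div_const ((m : ℝ) + 1) |>.congr_fun fun n ↦ ?_
  rw [one_div_pow_succ_mul_eq_sub_div 0 (by positivity) (by positivity) (by linarith)]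
  push_cast
  ring

/-- The right-hand side of `stmt10` is `momentFormula zr (H (m + 1)) (m + 1) p`. -/
noncomputable def momentFormula (z : ℕ → ℝ) (h c : ℝ) (p : ℕ) : ℝ :=
  ∑ j ∈ Icc 2 p, (-1) ^ (p - j) * z j / c ^ (p + 1 - j) + (-1) ^ (p - 1) * h / c ^ p

lemma momentFormula_one (z : ℕ → ℝ) (h c : ℝ) : momentFormula z h c 1 = h / c := by
  simp [momentFormula]

lemma momentFormula_succ (z : ℕ → ℝ) (h : ℝ) {c : ℝ} (hc : c ≠ 0) {p : ℕ} (hp : 1 ≤ p) :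
    momentFormula z h c (p + 1) = (z (p + 1) - momentFormula z h c p) / c := by
  obtain ⟨q, rfl⟩ : ∃ q, p = q + 1 := ⟨p - 1, by omega⟩
  have hterm : ∀ j ∈ Icc 2 (q + 1), (-1) ^ (q + 2 - j) * z j / c ^ (q + 3 - j)
      = -((-1) ^ (q + 1 - j) * z j / c ^ (q + 2 - j)) / c := by
    intro j hj
    rw [show q + 2 - j = q + 1 - j + 1 by grind, show q + 3 - j = q + 1 - j + 1 + 1 by grind]
    field_simp
    ring
  rw [momentFormula, momentFormula, ← insert_Icc_right_eq_Icc_add_one (by omega),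
    sum_insert (by simp), sum_congr rfl hterm, ← sum_div, sum_neg_distrib]
  generalize ∑ j ∈ Icc 2 (q + 1), (-1) ^ (q + 1 - j) * z j / c ^ (q + 1 + 1 - j) = S
  simp only [Nat.add_sub_cancel, Nat.add_sub_cancel_left, Nat.sub_self, pow_zero, pow_succ]
  field_simp
  ring

lemma hasSum_one_div_pow_mul (m : ℕ) {p : ℕ} (hp : 1 ≤ p) :
    HasSum (fun n : ℕ ↦ 1 / (((n : ℝ) + 1) ^ p * ((n : ℝ) + m + 2)))
      (momentFormula zr (H (m + 1)) ((m : ℝ) + 1) p) := by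
  induction p, hp using Nat.le_induction with
  | base => simpa only [momentFormula_one] using hasSum_one_div_succ_mul m
  | succ p hp ih =>
    rw [momentFormula_succ _ _ (by positivity) hp]
    exact ih.one_div_pow_succ_mul hp

lemma integral_pow_mul_pow_div (m n p : ℕ) :
    ∫ x in (0 : ℝ)..1, x ^ m * (x ^ (n + 1) / ((n : ℝ) + 1) ^ p)
      = 1 / (((n : ℝ) + 1) ^ p * ((n : ℝ) + m + 2)) := by
  simp_rw [mul_div_assoc', ← pow_add, div_eq_mul_inv _ (((n : ℝ) + 1) ^ p)]
  rw [intervalIntegral.integral_mul_const, integral_pow]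
  push_cast
  field_simp
  ring

lemma integral_pow_mul_Li {m p : ℕ} {s : ℝ}
    (hs : HasSum (fun n : ℕ ↦ 1 / (((n : ℝ) + 1) ^ p * ((n : ℝ) + m + 2))) s) :
    ∫ x in (0 : ℝ)..1, x ^ m * Li p x = s := by
  set F : ℕ → ℝ → ℝ := fun n x ↦ x ^ m * (x ^ (n + 1) / ((n : ℝ) + 1) ^ p)
  have hF_int (n : ℕ) : Integrable (F n) (volume.restrict (Set.Ioc 0 1)) :=
    (by fun_prop : Continuous (F n)).integrableOn_Ioc
  have hF_norm (n : ℕ) : ∫ x in Set.Ioc 0 1, ‖F n x‖ = ∫ x in (0 : ℝ)..1, F n x := by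
    rw [intervalIntegral.integral_of_le zero_le_one]
    refine setIntegral_congr_fun measurableSet_Ioc fun x hx ↦ ?_
    have := hx.1.le
    exact Real.norm_of_nonneg (by positivity)
  have hsum := hasSum_integral_of_summable_integral_norm hF_int (by
    simpa only [hF_norm, F, integral_pow_mul_pow_div] using hs.summable)
  simp only [← intervalIntegral.integral_of_le zero_le_one, F, integral_pow_mul_pow_div] at hsum
  rw [hs.unique hsum]
  simp only [Li, tsum_mul_left]

theorem stmt10 (p m : ℕ) (hp : 1 ≤ p) :
    (∫ x in (0:ℝ)..1, x ^ m * Li p x) =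
      (∑ j ∈ Finset.Icc 2 p, (-1 : ℝ) ^ (p - j) * zr j / ((m : ℝ) + 1) ^ (p + 1 - j))
      + (-1 : ℝ) ^ (p - 1) * H (m + 1) / ((m : ℝ) + 1) ^ p :=
  integral_pow_mul_Li (hasSum_one_div_pow_mul m hp)
end
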